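/- arXiv:math/0602104 — 2 statements merged into one kernel-verified Lean document; each statement's English description precedes it below -/
import Mathlib

section
/- Assume in addition that each A_i is a unital *-algebra over ℂ, each φ_i satisfies φ_i(a*) = conj(φ_i(a)) for all a ∈ A_i, and A carries the componentwise involution. Let x = (a_i)_{i∈I} and y = (b_i)_{i∈I} be elements of A. Then the unital *-subalgebras of A generated by {x} ∪ ι(D) and by {y} ∪ ι(D) are free over D in (A, E) if and only if, for every i ∈ I, the unital *-subalgebras of A_i generated by a_i and by b_i are free in (A_i, φ_i). -/
/-- The diagonal embedding `ι : (I → ℂ) → Π i, A i`, `ι d = (d i • 1)_{i}`. -/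
noncomputable def diag {I : Type*} (A : I → Type*) [∀ i, Ring (A i)]
    [∀ i, Algebra ℂ (A i)] (d : I → ℂ) : ∀ i, A i :=
  fun i => d i • (1 : A i)

/-- The componentwise conditional expectation `E : Π i, A i → (I → ℂ)`. -/
noncomputable def condExp {I : Type*} {A : I → Type*} [∀ i, Ring (A i)]
    [∀ i, Algebra ℂ (A i)] (φ : ∀ i, A i →ₗ[ℂ] ℂ) (x : ∀ i, A i) : I → ℂ :=
  fun i => φ i (x i)

/-- Two subalgebras `B₁, B₂` of `A = Π i, A i` are free over `D` with respect to
`E = condExp φ`: every alternating product of `E`-centered elements is `E`-centered. -/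
def FreeOverD {I : Type*} {A : I → Type*} [∀ i, Ring (A i)] [∀ i, Algebra ℂ (A i)]
    (φ : ∀ i, A i →ₗ[ℂ] ℂ) (B₁ B₂ : Subalgebra ℂ (∀ i, A i)) : Prop :=
  ∀ (n : ℕ), 1 ≤ n → ∀ (y : Fin n → ∀ i, A i) (c : Fin n → Bool),
    (∀ k, y k ∈ (if c k then B₁ else B₂)) →
    (∀ (k : Fin n) (h : (k : ℕ) + 1 < n), c k ≠ c ⟨(k : ℕ) + 1, h⟩) →
    (∀ k, condExp φ (y k) = 0) →
    condExp φ (List.ofFn y).prod = 0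

/-- Two unital subalgebras of a noncommutative probability space `(B, φ)` are free. -/
def FreeSubalgebras {B : Type*} [Ring B] [Algebra ℂ B] (φ : B →ₗ[ℂ] ℂ)
    (B₁ B₂ : Subalgebra ℂ B) : Prop :=
  ∀ (n : ℕ), 1 ≤ n → ∀ (y : Fin n → B) (c : Fin n → Bool),
    (∀ k, y k ∈ (if c k then B₁ else B₂)) →
    (∀ (k : Fin n) (h : (k : ℕ) + 1 < n), c k ≠ c ⟨(k : ℕ) + 1, h⟩) →
    (∀ k, φ (y k) = 0) →
    φ (List.ofFn y).prod = 0

/-! Freeness over the diagonal is a componentwise condition: `E` and products are computed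
coordinatewise, so an alternating centred word in `A` is a family of alternating centred words
in the `A i`; conversely a word in `A i` lifts to `A` through `Pi.single i`, which keeps it
centred. Both lifting and projecting respect the generated `*`-subalgebras because the image
of `ι(D)` in each coordinate consists of scalars and `ι(Pi.single i 1)` cuts out coordinate `i`. -/

section FreeOverD

variable {I : Type*} {A : I → Type*} [∀ i, Ring (A i)] [∀ i, Algebra ℂ (A i)]
  (φ : ∀ i, A i →ₗ[ℂ] ℂ)

theorem condExp_single [DecidableEq I] (i : I) (a : A i) :
    condExp φ (Pi.single i a) = Pi.single i (φ i a) := by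
  funext j
  obtain rfl | hj := eq_or_ne j i
  · simp [condExp]
  · simp [condExp, hj]

theorem condExp_list_ofFn_prod_apply {n : ℕ} (y : Fin n → ∀ i, A i) (i : I) :
    condExp φ (List.ofFn y).prod i = φ i (List.ofFn fun k => y k i).prod := by
  rw [condExp, Pi.list_prod_apply, List.map_ofFn]
  rfl

variable {φ} {B₁ B₂ : Subalgebra ℂ (∀ i, A i)}

theorem FreeOverD.freeSubalgebras_of_single_mem [DecidableEq I] (h : FreeOverD φ B₁ B₂) (i : I)
    {C₁ C₂ : Subalgebra ℂ (A i)} (hC₁ : ∀ a ∈ C₁, Pi.single i a ∈ B₁)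
    (hC₂ : ∀ a ∈ C₂, Pi.single i a ∈ B₂) : FreeSubalgebras (φ i) C₁ C₂ := by
  intro n hn b c hmem halt hcent
  have hsingle : ∀ k, Pi.single i (b k) ∈ if c k then B₁ else B₂ := fun k => by
    have hk := hmem k
    split_ifs at hk ⊢
    exacts [hC₁ _ hk, hC₂ _ hk]
  have hword := congrFun
    (h n hn (fun k => Pi.single i (b k)) c hsingle halt fun k => by simp [condExp_single, hcent]) i
  simpa [condExp_list_ofFn_prod_apply] using hword

theorem freeOverD_of_forall_freeSubalgebras {C₁ C₂ : ∀ i, Subalgebra ℂ (A i)}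
    (h : ∀ i, FreeSubalgebras (φ i) (C₁ i) (C₂ i))
    (hB₁ : ∀ i, ∀ z ∈ B₁, z i ∈ C₁ i) (hB₂ : ∀ i, ∀ z ∈ B₂, z i ∈ C₂ i) :
    FreeOverD φ B₁ B₂ := by
  intro n hn y c hmem halt hcent
  funext i
  rw [condExp_list_ofFn_prod_apply]
  refine h i n hn (fun k => y k i) c (fun k => ?_) halt fun k => congrFun (hcent k) i
  have hk := hmem k
  split_ifs at hk ⊢
  exacts [hB₁ i _ hk, hB₂ i _ hk]

end FreeOverD

section StarAdjoin

variable {I : Type*} {A : I → Type*} [∀ i, Ring (A i)] [∀ i, StarRing (A i)]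
  [∀ i, Algebra ℂ (A i)] [∀ i, StarModule ℂ (A i)]

theorem map_evalStarAlgHom_adjoin_union_range_diag (x : ∀ i, A i) (i : I) :
    (StarAlgebra.adjoin ℂ ({x} ∪ Set.range (diag A))).map (Pi.evalStarAlgHom ℂ A i) =
      StarAlgebra.adjoin ℂ {x i} := by
  rw [StarAlgHom.map_adjoin, Set.image_union, Set.image_singleton]
  refine le_antisymm (StarAlgebra.adjoin_le (Set.union_subset ?_ ?_))
    (StarAlgebra.adjoin_mono Set.subset_union_left)
  · exact Set.singleton_subset_iff.2 (StarAlgebra.subset_adjoin ℂ _ rfl)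
  · rintro _ ⟨_, ⟨d, rfl⟩, rfl⟩
    exact SMulMemClass.smul_mem _ (one_mem _)

theorem apply_mem_adjoin_of_mem_adjoin_union_range_diag {x z : ∀ i, A i} (i : I)
    (hz : z ∈ StarAlgebra.adjoin ℂ ({x} ∪ Set.range (diag A))) :
    z i ∈ StarAlgebra.adjoin ℂ {x i} :=
  map_evalStarAlgHom_adjoin_union_range_diag x i ▸ StarSubalgebra.mem_map.2 ⟨z, hz, rfl⟩

theorem single_mem_adjoin_union_range_diag [DecidableEq I] {x : ∀ i, A i} {i : I} {a : A i}
    (ha : a ∈ StarAlgebra.adjoin ℂ {x i}) :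
    Pi.single i a ∈ StarAlgebra.adjoin ℂ ({x} ∪ Set.range (diag A)) := by
  rw [← map_evalStarAlgHom_adjoin_union_range_diag] at ha
  obtain ⟨z, hz, rfl⟩ := StarSubalgebra.mem_map.1 ha
  change Pi.single i (z i) ∈ _
  have hcut : Pi.single i (z i) = diag A (Pi.single i 1) * z := by
    funext j
    obtain rfl | hj := eq_or_ne j i
    · simp [diag]
    · simp [diag, hj]
  rw [hcut]
  exact mul_mem (StarAlgebra.subset_adjoin ℂ _ (Or.inr ⟨_, rfl⟩)) hz

end StarAdjoin

theorem starElemFreeOverD_iff_forall_starFreePair_general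
    {I : Type*} {A : I → Type*} [∀ i, Ring (A i)]
    [∀ i, StarRing (A i)] [∀ i, Algebra ℂ (A i)] [∀ i, StarModule ℂ (A i)]
    (φ : ∀ i, A i →ₗ[ℂ] ℂ)
    (x y : ∀ i, A i) :
    FreeOverD φ
        (StarAlgebra.adjoin ℂ ({x} ∪ Set.range (diag A))).toSubalgebra
        (StarAlgebra.adjoin ℂ ({y} ∪ Set.range (diag A))).toSubalgebra
      ↔ ∀ i, FreeSubalgebras (φ i)
          (StarAlgebra.adjoin ℂ ({x i} : Set (A i))).toSubalgebra
          (StarAlgebra.adjoin ℂ ({y i} : Set (A i))).toSubalgebra := by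
  classical
  constructor
  · exact fun h i => h.freeSubalgebras_of_single_mem i
      (fun _ => single_mem_adjoin_union_range_diag) (fun _ => single_mem_adjoin_union_range_diag)
  · exact fun h => freeOverD_of_forall_freeSubalgebras h
      (fun i _ => apply_mem_adjoin_of_mem_adjoin_union_range_diag i)
      (fun i _ => apply_mem_adjoin_of_mem_adjoin_union_range_diag i)

/-- in the `*`-algebra setting (componentwise involution on `A`,
`φ_i(a*) = conj (φ_i a)`), the unital `*`-subalgebras of `A` generated by
`{x} ∪ ι(D)` and `{y} ∪ ι(D)` are free over `D` in `(A, E)` iff, for every `i`,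
the unital `*`-subalgebras of `A_i` generated by `x i` and by `y i` are free
in `(A_i, φ_i)`. -/
theorem starElemFreeOverD_iff_forall_starFreePair
    {I : Type*} [Nonempty I] {A : I → Type*} [∀ i, Ring (A i)]
    [∀ i, StarRing (A i)] [∀ i, Algebra ℂ (A i)] [∀ i, StarModule ℂ (A i)]
    (φ : ∀ i, A i →ₗ[ℂ] ℂ) (hφ : ∀ i, φ i 1 = 1)
    (hφstar : ∀ i (a : A i), φ i (star a) = starRingEnd ℂ (φ i a))
    (x y : ∀ i, A i) :
    FreeOverD φ
        (StarAlgebra.adjoin ℂ ({x} ∪ Set.range (diag A))).toSubalgebra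
        (StarAlgebra.adjoin ℂ ({y} ∪ Set.range (diag A))).toSubalgebra
      ↔ ∀ i, FreeSubalgebras (φ i)
          (StarAlgebra.adjoin ℂ ({x i} : Set (A i))).toSubalgebra
          (StarAlgebra.adjoin ℂ ({y i} : Set (A i))).toSubalgebra :=
  starElemFreeOverD_iff_forall_starFreePair_general φ x y
end

section
/- Assume the index set I is finite and let x = (a_i)_{i∈I} ∈ A. Then the unital subalgebra of A generated by {x} ∪ ι(D) equals the set {y ∈ A : y(i) ∈ Alg(a_i) for every i ∈ I}, where Alg(a_i) denotes the unital subalgebra of A_i generated by a_i. -/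
/-!
The diagonal contains the coordinate idempotents `eᵢ = Pi.single i 1`. Multiplying by `eᵢ`
moves `Alg(aᵢ)` into the `i`-th coordinate of the generated subalgebra, and with `I` finite
every `y` with `y i ∈ Alg(aᵢ)` is the finite sum `∑ i, Pi.single i (y i)` of such pieces.
-/

namespace Subalgebra

variable {R I : Type*} {A : I → Type*} [CommSemiring R] [∀ i, Semiring (A i)]
  [∀ i, Algebra R (A i)] [DecidableEq I] {S : Subalgebra R (∀ i, A i)}

theorem single_mem_of_mem_adjoin {i : I} {s : Set (A i)} (hs : ∀ a ∈ s, Pi.single i a ∈ S)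
    (hone : Pi.single i 1 ∈ S) {a : A i} (ha : a ∈ Algebra.adjoin R s) :
    Pi.single i a ∈ S := by
  induction ha using Algebra.adjoin_induction with
  | mem a ha => exact hs a ha
  | algebraMap r =>
    rw [Algebra.algebraMap_eq_smul_one, Pi.single_smul]
    exact S.smul_mem hone r
  | add a b _ _ ha hb => rw [Pi.single_add]; exact S.add_mem ha hb
  | mul a b _ _ ha hb => rw [Pi.single_mul]; exact S.mul_mem ha hb

theorem pi_adjoin_singleton_le [Finite I] {x : ∀ i, A i} (hx : x ∈ S)
    (hone : ∀ i, Pi.single i 1 ∈ S) :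
    pi Set.univ (fun i => Algebra.adjoin R {x i}) ≤ S := by
  have := Fintype.ofFinite I
  intro y hy
  have hsingle (i : I) : Pi.single i (y i) ∈ S := by
    refine single_mem_of_mem_adjoin ?_ (hone i) (hy i (Set.mem_univ i))
    rintro _ rfl
    rw [← one_mul (x i), Pi.single_mul_left]
    exact S.mul_mem (hone i) hx
  rw [← Finset.univ_sum_single y]
  exact S.sum_mem fun i _ => hsingle i

end Subalgebra

theorem diag_mem_pi {I : Type*} {A : I → Type*} [∀ i, Ring (A i)] [∀ i, Algebra ℂ (A i)]
    (t : ∀ i, Subalgebra ℂ (A i)) (d : I → ℂ) : diag A d ∈ Subalgebra.pi Set.univ t :=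
  fun i _ => (t i).smul_mem (t i).one_mem (d i)

theorem diag_single {I : Type*} [DecidableEq I] {A : I → Type*} [∀ i, Ring (A i)]
    [∀ i, Algebra ℂ (A i)] (i : I) : diag A (Pi.single i 1) = Pi.single i 1 := by
  funext j
  rcases eq_or_ne j i with rfl | hji
  · simp [diag]
  · simp [diag, hji]

theorem adjoin_single_with_diag_eq_pi_adjoin_general
    {I : Type*} [Finite I] {A : I → Type*} [∀ i, Ring (A i)]
    [∀ i, Algebra ℂ (A i)] (x : ∀ i, A i) :
    (Algebra.adjoin ℂ ({x} ∪ Set.range (diag A)) : Set (∀ i, A i))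
      = {y : ∀ i, A i | ∀ i, y i ∈ Algebra.adjoin ℂ ({x i} : Set (A i))} := by
  classical
  set S := Algebra.adjoin ℂ ({x} ∪ Set.range (diag A))
  set T := Subalgebra.pi Set.univ fun i => Algebra.adjoin ℂ ({x i} : Set (A i))
  have hST : S ≤ T := by
    refine Algebra.adjoin_le (Set.union_subset ?_ ?_)
    · exact Set.singleton_subset_iff.mpr fun i _ => Algebra.self_mem_adjoin_singleton ℂ (x i)
    · rintro _ ⟨d, rfl⟩
      exact diag_mem_pi _ d
  have hTS : T ≤ S := by
    refine Subalgebra.pi_adjoin_singleton_le (Algebra.subset_adjoin (Or.inl rfl)) fun i => ?_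
    rw [← diag_single]
    exact Algebra.subset_adjoin (Or.inr ⟨_, rfl⟩)
  rw [le_antisymm hST hTS]
  ext y
  simp [T]

/-- for a finite index set `I` and `x = (a_i)_{i∈I} ∈ A`, the unital
subalgebra of `A` generated by `{x} ∪ ι(D)` is exactly the set of tuples `y` with
`y i ∈ Alg(a_i)` for every `i`, where `Alg(a_i)` is the unital subalgebra of `A_i`
generated by `a_i`. -/
theorem adjoin_single_with_diag_eq_pi_adjoin
    {I : Type*} [Nonempty I] [Finite I] {A : I → Type*} [∀ i, Ring (A i)]
    [∀ i, Algebra ℂ (A i)] (x : ∀ i, A i) :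
    (Algebra.adjoin ℂ ({x} ∪ Set.range (diag A)) : Set (∀ i, A i))
      = {y : ∀ i, A i | ∀ i, y i ∈ Algebra.adjoin ℂ ({x i} : Set (A i))} :=
  adjoin_single_with_diag_eq_pi_adjoin_general x
end
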